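/- arXiv:2005.12244 — 2 statements merged into one kernel-verified Lean document; each statement's English description precedes it below -/
import Mathlib

section
/- For even k, the minimum number of control nodes of the complete k-uniform hypergraph on n > k nodes is exactly n−1. -/
/-!
Lower bound: if two nodes `a ≠ b` are both uncontrolled, the transposition `(a b)` fixes every
input vector and preserves the fully symmetric tensor of the complete hypergraph, so contraction
maps vectors fixed by `(a b)` to vectors fixed by `(a b)`. The controllability space therefore
lies in the proper subspace `{x | x a = x b}`.

Upper bound: if every node but `a` is controlled, contracting `k - 1` distinct basis vectors
`e_{s_i}` with `s_i ≠ a` gives the vector `j ↦ A(j, s_1, …, s_{k-1})`, whose `a`-th coordinate is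
`1/(k-1)! ≠ 0`. Together with the `e_j`, `j ≠ a`, it spans `ℝⁿ`.
-/

noncomputable section
open Classical

/-- Prepend `j` to the index tuple `js`. -/
def consIdx {n k : ℕ} (j : Fin n) (js : Fin (k - 1) → Fin n) : Fin k → Fin n :=
  fun t => if h : (t : ℕ) = 0 then j
    else js ⟨(t : ℕ) - 1, by have := t.isLt; omega⟩

/-- Adjacency tensor of a `k`-uniform hypergraph with hyperedge set `E`. -/
def adjT (n k : ℕ) (E : Finset (Finset (Fin n))) : (Fin k → Fin n) → ℝ :=
  fun j => if Function.Injective j ∧ Finset.image j Finset.univ ∈ E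
    then ((Nat.factorial (k - 1) : ℝ))⁻¹ else 0

/-- Contraction of a `k`-th order tensor along `k−1` modes with vectors `v`. -/
def tcontract {n k : ℕ} (A : (Fin k → Fin n) → ℝ) (v : Fin (k - 1) → (Fin n → ℝ)) :
    Fin n → ℝ :=
  fun j => ∑ js : Fin (k - 1) → Fin n, A (consIdx j js) * ∏ i, v i (js i)

/-- The controllability subspace `𝒞(A,B)`: the smallest subspace of `ℝⁿ` containing the
set `Bc` of input columns and closed under the contraction map `v₁,…,v_{k−1} ↦ A v₁ ⋯ v_{k−1}`. -/
def ctrlSpace {n k : ℕ} (A : (Fin k → Fin n) → ℝ) (Bc : Set (Fin n → ℝ)) :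
    Submodule ℝ (Fin n → ℝ) :=
  sInf {W : Submodule ℝ (Fin n → ℝ) | Bc ⊆ ↑W ∧
    ∀ v : Fin (k - 1) → (Fin n → ℝ), (∀ i, v i ∈ W) → tcontract A v ∈ W}

/-- The hyperedge `{l, l+1, …, l+k−1}` of a `k`-uniform hyperchain. -/
def chainEdge (n k l : ℕ) : Finset (Fin n) :=
  Finset.univ.filter (fun i => l ≤ (i : ℕ) ∧ (i : ℕ) < l + k)

/-- The hyperedge set of the `k`-uniform hyperchain on `n` nodes. -/
def chainE (n k : ℕ) : Finset (Finset (Fin n)) :=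
  (Finset.range (n - k + 1)).image (chainEdge n k)

/-- Adjacency tensor of the complete `k`-uniform hypergraph on `n` nodes. -/
def completeT (n k : ℕ) : (Fin k → Fin n) → ℝ :=
  fun j => if Function.Injective j then ((Nat.factorial (k - 1) : ℝ))⁻¹ else 0

open Function Finset

section Contraction

variable {n k : ℕ}

lemma consIdx_injective {j : Fin n} {js : Fin (k - 1) → Fin n} (hjs : Injective js)
    (hj : j ∉ Set.range js) : Injective (consIdx j js) := by
  intro t₁ t₂ h
  simp only [consIdx] at h
  split_ifs at h with h₁ h₂ h₂
  · exact Fin.ext (h₁.trans h₂.symm)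
  · exact absurd ⟨_, h.symm⟩ hj
  · exact absurd ⟨_, h⟩ hj
  · have := congrArg Fin.val (hjs h)
    simp only at this
    exact Fin.ext (by omega)

lemma consIdx_perm (σ : Equiv.Perm (Fin n)) (j : Fin n) (js : Fin (k - 1) → Fin n) :
    consIdx (σ j) (σ ∘ js) = σ ∘ consIdx j js := by
  funext t
  simp only [consIdx, comp_apply]
  split <;> rfl

lemma completeT_perm_comp (σ : Equiv.Perm (Fin n)) (f : Fin k → Fin n) :
    completeT n k (σ ∘ f) = completeT n k f := by
  simp only [completeT, σ.injective.of_comp_iff]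

lemma completeT_ne_zero {f : Fin k → Fin n} (hf : Injective f) : completeT n k f ≠ 0 := by
  simp [completeT, hf, Nat.factorial_ne_zero]

lemma tcontract_comp_perm {A : (Fin k → Fin n) → ℝ} {σ : Equiv.Perm (Fin n)}
    (hA : ∀ f, A (σ ∘ f) = A f) (v : Fin (k - 1) → Fin n → ℝ) :
    tcontract A (fun i => v i ∘ σ) = tcontract A v ∘ σ := by
  funext j
  refine Fintype.sum_equiv ((Equiv.refl _).arrowCongr σ) _ _ fun js => ?_
  rw [show (Equiv.refl _).arrowCongr σ js = σ ∘ js from rfl, consIdx_perm, hA]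
  rfl

lemma tcontract_single (A : (Fin k → Fin n) → ℝ) (s : Fin (k - 1) → Fin n) :
    tcontract A (fun i => Pi.single (s i) 1) = fun j => A (consIdx j s) := by
  funext j
  rw [tcontract, Fintype.sum_eq_single s]
  · simp
  · intro js hne
    obtain ⟨i, hi⟩ := Function.ne_iff.1 hne
    rw [prod_eq_zero (mem_univ i) (by simp [hi]), mul_zero]

end Contraction

lemma Submodule.eq_top_of_single_mem {K ι : Type*} [Field K] [Fintype ι] [DecidableEq ι]
    {W : Submodule K (ι → K)} {a : ι} (hW : ∀ j ≠ a, Pi.single j 1 ∈ W) {w : ι → K}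
    (hw : w ∈ W) (ha : w a ≠ 0) : W = ⊤ := by
  have hsmul : ∀ j, Pi.single j (w j) = w j • (Pi.single j 1 : ι → K) := fun j => by
    rw [← Pi.single_smul, smul_eq_mul, mul_one]
  have hsingle : ∀ j, Pi.single j 1 ∈ W := by
    intro j
    rcases eq_or_ne j a with rfl | hj
    · have hrest : Pi.single j (w j) = w - ∑ i ∈ univ.erase j, Pi.single i (w i) := by
        rw [eq_sub_iff_add_eq, add_sum_erase univ (fun i => Pi.single i (w i)) (mem_univ j),
          univ_sum_single]
      have hmem : Pi.single j (w j) ∈ W := by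
        rw [hrest]
        refine W.sub_mem hw (W.sum_mem fun i hi => ?_)
        rw [hsmul]
        exact W.smul_mem _ (hW i (ne_of_mem_erase hi))
      simpa [hsmul, ha] using W.smul_mem (w j)⁻¹ hmem
    · exact hW j hj
  rw [eq_top_iff, ← (Pi.basisFun K ι).span_eq, Submodule.span_le]
  rintro _ ⟨j, rfl⟩
  simpa using hsingle j

section ControlSpace

variable {n k : ℕ} {A : (Fin k → Fin n) → ℝ}

lemma ctrlSpace_le_eqLocus_funLeft {Bc : Set (Fin n → ℝ)} {σ : Equiv.Perm (Fin n)}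
    (hA : ∀ f, A (σ ∘ f) = A f) (hB : ∀ b ∈ Bc, b ∘ σ = b) :
    ctrlSpace A Bc ≤ LinearMap.eqLocus (LinearMap.funLeft ℝ ℝ σ) LinearMap.id := by
  refine sInf_le ⟨fun b hb => LinearMap.mem_eqLocus.2 (hB b hb), fun v hv => ?_⟩
  simp only [LinearMap.mem_eqLocus, LinearMap.id_apply] at hv ⊢
  change tcontract A v ∘ σ = tcontract A v
  rw [← tcontract_comp_perm hA]
  exact congrArg _ (funext hv)

lemma ctrlSpace_ne_top_of_swap {S : Finset (Fin n)} {a b : Fin n} (hab : a ≠ b)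
    (ha : a ∉ S) (hb : b ∉ S) (hA : ∀ f, A (Equiv.swap a b ∘ f) = A f) :
    ctrlSpace A {x | ∃ s ∈ S, x = Pi.single s 1} ≠ ⊤ := by
  intro htop
  have hle : ctrlSpace A {x | ∃ s ∈ S, x = Pi.single s 1} ≤ _ :=
    ctrlSpace_le_eqLocus_funLeft hA fun _ ⟨s, hs, hx⟩ => by
      rw [hx, Pi.single_comp_equiv, Equiv.symm_swap,
        Equiv.swap_apply_of_ne_of_ne (ne_of_mem_of_not_mem hs ha) (ne_of_mem_of_not_mem hs hb)]
  rw [htop, top_le_iff] at hle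
  have hfix := LinearMap.mem_eqLocus.1 (hle ▸ Submodule.mem_top : Pi.single a (1 : ℝ) ∈ _)
  have := congrFun hfix a
  simp [hab] at this

lemma ctrlSpace_eq_top_of_consIdx_ne_zero {Bc : Set (Fin n → ℝ)} {a : Fin n}
    (hB : ∀ j ≠ a, Pi.single j 1 ∈ Bc) {s : Fin (k - 1) → Fin n} (hs : ∀ i, s i ≠ a)
    (hA : A (consIdx a s) ≠ 0) : ctrlSpace A Bc = ⊤ := by
  refine sInf_eq_top.2 fun W ⟨hBW, hW⟩ => ?_
  have hsingle : ∀ j ≠ a, Pi.single j 1 ∈ W := fun j hj => hBW (hB j hj)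
  refine Submodule.eq_top_of_single_mem hsingle (hW _ fun i => hsingle _ (hs i)) ?_
  rwa [tcontract_single]

end ControlSpace

theorem stmt13_general {n k : ℕ} (hkn : k < n) :
    (∃ S : Finset (Fin n), S.card = n - 1 ∧
        ctrlSpace (completeT n k) {x | ∃ s ∈ S, x = (Pi.single s 1 : Fin n → ℝ)} = ⊤)
      ∧ ∀ S : Finset (Fin n),
        ctrlSpace (completeT n k) {x | ∃ s ∈ S, x = (Pi.single s 1 : Fin n → ℝ)} = ⊤ →
          n - 1 ≤ S.card := by
  constructor
  · obtain ⟨m, rfl⟩ : ∃ m, n = m + 1 := ⟨n - 1, by omega⟩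
    set s : Fin (k - 1) → Fin (m + 1) := fun i => (Fin.castLE (by omega) i).castSucc
    have hs : ∀ i, s i ≠ Fin.last m := fun i => Fin.castSucc_ne_last _
    have hsinj : Injective s := (Fin.castSucc_injective m).comp (Fin.castLE_injective _)
    refine ⟨univ.erase (Fin.last m), by simp, ctrlSpace_eq_top_of_consIdx_ne_zero
      (fun j hj => ⟨j, mem_erase.2 ⟨hj, mem_univ j⟩, rfl⟩) hs
      (completeT_ne_zero (consIdx_injective hsinj fun ⟨i, hi⟩ => hs i hi))⟩
  · intro S hS
    by_contra! hlt
    obtain ⟨a, ha, b, hb, hab⟩ := one_lt_card.1 <|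
      show 1 < Sᶜ.card by rw [card_compl, Fintype.card_fin]; omega
    exact ctrlSpace_ne_top_of_swap hab (mem_compl.1 ha) (mem_compl.1 hb)
      (completeT_perm_comp _) hS

/-- For even `k`, the minimum number of control nodes of the complete `k`-uniform
hypergraph on `n > k` nodes is exactly `n−1`. -/
theorem stmt13 {n k : ℕ} (hkeven : Even k) (hk : 2 ≤ k) (hkn : k < n) :
    (∃ S : Finset (Fin n), S.card = n - 1 ∧
        ctrlSpace (completeT n k) {x | ∃ s ∈ S, x = (Pi.single s 1 : Fin n → ℝ)} = ⊤)
      ∧ ∀ S : Finset (Fin n),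
        ctrlSpace (completeT n k) {x | ∃ s ∈ S, x = (Pi.single s 1 : Fin n → ℝ)} = ⊤ →
          n - 1 ≤ S.card :=
  stmt13_general hkn
end
end

section
/- Let G be a k-uniform hypergraph whose node set splits into two nonempty parts V₁ and V₂ with no hyperedge intersecting both (G is disconnected along this partition), and let A be its adjacency tensor. Then the coordinate subspaces ℝ^{V₁} × {0} and {0} × ℝ^{V₂} are each invariant under the closure operation v₁,…,v_{k−1} ↦ A v₁ ⋯ v_{k−1} together with span; consequently any controlling node set must intersect both V₁ and V₂, and 𝒞(A,B) = 𝒞(A, B₁) ⊕ 𝒞(A, B₂) when the columns of B are standard basis vectors split according to the partition. -/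
noncomputable section
open Classical

/-! A nonzero entry of the adjacency tensor has all its indices in one part, so the vectors
vanishing on one part form a subspace invariant under contraction. Contraction is multilinear:
expanding `A (a₁ + b₁) ⋯ (a_{k-1} + b_{k-1})` with `aᵢ ∈ 𝒞(A,B₁)` (supported on `V₁`) and
`bᵢ ∈ 𝒞(A,B₂)` (supported on `V₂`), every mixed term vanishes, since it pairs a factor supported
on `V₁` with one supported on `V₂`. Hence `𝒞(A,B₁) ⊔ 𝒞(A,B₂)` is closed under contraction, which
gives the decomposition; disjointness, and the fact that a controlling set meets both parts,
follow from the invariant coordinate subspaces. -/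

def vanishingOn (R : Type*) [Semiring R] {ι : Type*} (Q : ι → Prop) : Submodule R (ι → R) where
  carrier := {f | ∀ x, Q x → f x = 0}
  add_mem' ha hb x hx := by simp [ha x hx, hb x hx]
  zero_mem' _ _ := rfl
  smul_mem' c _ hf x hx := by simp [hf x hx]

section vanishingOn

variable {R : Type*} [Semiring R] {ι : Type*} {Q : ι → Prop}

theorem disjoint_vanishingOn_not : Disjoint (vanishingOn R Q) (vanishingOn R (fun x => ¬Q x)) := by
  rw [Submodule.disjoint_def]
  intro f hQ hnQ
  funext x
  by_cases hx : Q x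
  · exact hQ x hx
  · exact hnQ x hx

theorem single_mem_vanishingOn [DecidableEq ι] [Nontrivial R] {s : ι} :
    (Pi.single s 1 : ι → R) ∈ vanishingOn R Q ↔ ¬Q s := by
  constructor
  · intro h hs
    simpa using h s hs
  · intro hs x hx
    exact Pi.single_eq_of_ne (by rintro rfl; exact hs hx) 1

end vanishingOn

section ctrlSpace

variable {n k : ℕ} (A : (Fin k → Fin n) → ℝ)

theorem subset_ctrlSpace (B : Set (Fin n → ℝ)) : B ⊆ ctrlSpace A B :=
  fun _ hx => Submodule.mem_sInf.mpr fun _ hW => hW.1 hx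

theorem tcontract_mem_ctrlSpace {B : Set (Fin n → ℝ)} {v : Fin (k - 1) → Fin n → ℝ}
    (hv : ∀ i, v i ∈ ctrlSpace A B) : tcontract A v ∈ ctrlSpace A B :=
  Submodule.mem_sInf.mpr fun W hW => hW.2 v fun i => Submodule.mem_sInf.mp (hv i) W hW

theorem ctrlSpace_le {B : Set (Fin n → ℝ)} {W : Submodule ℝ (Fin n → ℝ)} (hB : B ⊆ W)
    (hW : ∀ v : Fin (k - 1) → Fin n → ℝ, (∀ i, v i ∈ W) → tcontract A v ∈ W) :
    ctrlSpace A B ≤ W :=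
  sInf_le ⟨hB, hW⟩

theorem ctrlSpace_mono {B₁ B₂ : Set (Fin n → ℝ)} (h : B₁ ⊆ B₂) :
    ctrlSpace A B₁ ≤ ctrlSpace A B₂ :=
  ctrlSpace_le A (h.trans (subset_ctrlSpace A B₂)) fun _ => tcontract_mem_ctrlSpace A

def tcontractMultilinear : MultilinearMap ℝ (fun _ : Fin (k - 1) => Fin n → ℝ) (Fin n → ℝ) :=
  MultilinearMap.pi fun j => ∑ js : Fin (k - 1) → Fin n, A (consIdx j js) •
    (MultilinearMap.mkPiAlgebra ℝ (Fin (k - 1)) ℝ).compLinearMap fun i => LinearMap.proj (js i)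

theorem tcontractMultilinear_apply (v : Fin (k - 1) → Fin n → ℝ) :
    tcontractMultilinear A v = tcontract A v := by
  funext j
  simp [tcontractMultilinear, tcontract, MultilinearMap.mkPiAlgebra_apply]

theorem tcontract_add (a b : Fin (k - 1) → Fin n → ℝ) :
    tcontract A (a + b) = ∑ s : Finset (Fin (k - 1)), tcontract A (s.piecewise a b) := by
  simp only [← tcontractMultilinear_apply, MultilinearMap.map_add_univ]

theorem ctrlSpace_union {B₁ B₂ : Set (Fin n → ℝ)}
    (hmix : ∀ (v : Fin (k - 1) → Fin n → ℝ) (i j : Fin (k - 1)),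
      v i ∈ ctrlSpace A B₁ → v j ∈ ctrlSpace A B₂ → tcontract A v = 0) :
    ctrlSpace A (B₁ ∪ B₂) = ctrlSpace A B₁ ⊔ ctrlSpace A B₂ := by
  refine le_antisymm ?_ (sup_le (ctrlSpace_mono A Set.subset_union_left)
    (ctrlSpace_mono A Set.subset_union_right))
  refine ctrlSpace_le A (Set.union_subset
    ((subset_ctrlSpace A B₁).trans (SetLike.coe_subset_coe.mpr le_sup_left))
    ((subset_ctrlSpace A B₂).trans (SetLike.coe_subset_coe.mpr le_sup_right))) ?_
  intro v hv
  choose a ha b hb hab using fun i => Submodule.mem_sup.mp (hv i)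
  obtain rfl : v = a + b := funext fun i => (hab i).symm
  rw [tcontract_add]
  refine Submodule.sum_mem _ fun s _ => ?_
  by_cases hs_univ : s = Finset.univ
  · rw [hs_univ, Finset.piecewise_univ]
    exact Submodule.mem_sup_left (tcontract_mem_ctrlSpace A ha)
  by_cases hs_empty : s = ∅
  · rw [hs_empty, Finset.piecewise_empty]
    exact Submodule.mem_sup_right (tcontract_mem_ctrlSpace A hb)
  obtain ⟨i, hi⟩ := Finset.nonempty_iff_ne_empty.mpr hs_empty
  obtain ⟨j, hj⟩ : ∃ j, j ∉ s := by simpa [Finset.eq_univ_iff_forall] using hs_univ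
  rw [hmix _ i j (by rw [Finset.piecewise_eq_of_mem _ _ _ hi]; exact ha i)
    (by rw [Finset.piecewise_eq_of_notMem _ _ _ hj]; exact hb j)]
  exact zero_mem _

end ctrlSpace

def IsBlockDiagonal {ι R : Type*} [Zero R] {k : ℕ} (Q : ι → Prop) (A : (Fin k → ι) → R) : Prop :=
  ∀ j, A j ≠ 0 → ∀ s t, (Q (j s) ↔ Q (j t))

theorem adjT_isBlockDiagonal {n k : ℕ} {E : Finset (Finset (Fin n))} {P : Fin n → Prop}
    (hsplit : ∀ e ∈ E, (∀ i ∈ e, P i) ∨ (∀ i ∈ e, ¬P i)) : IsBlockDiagonal P (adjT n k E) := by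
  intro j hj s t
  have hE : Finset.image j Finset.univ ∈ E := by
    by_contra h
    simp [adjT, h] at hj
  have hs := Finset.mem_image_of_mem j (Finset.mem_univ s)
  have ht := Finset.mem_image_of_mem j (Finset.mem_univ t)
  rcases hsplit _ hE with h | h
  · exact iff_of_true (h _ hs) (h _ ht)
  · exact iff_of_false (h _ hs) (h _ ht)

namespace IsBlockDiagonal

variable {n k : ℕ} {Q : Fin n → Prop} {A : (Fin k → Fin n) → ℝ}

theorem not (hA : IsBlockDiagonal Q A) : IsBlockDiagonal (fun x => ¬Q x) A :=
  fun j hj s t => not_congr (hA j hj s t)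

theorem consIdx_iff (hA : IsBlockDiagonal Q A) {x : Fin n} {js : Fin (k - 1) → Fin n}
    (hx : A (consIdx x js) ≠ 0) (i : Fin (k - 1)) : Q (js i) ↔ Q x := by
  have := i.isLt
  simpa [consIdx] using hA _ hx ⟨i + 1, by omega⟩ ⟨0, by omega⟩

theorem tcontract_mem_vanishingOn (hk : 2 ≤ k) (hA : IsBlockDiagonal Q A)
    {v : Fin (k - 1) → Fin n → ℝ} (hv : ∀ i, v i ∈ vanishingOn ℝ Q) :
    tcontract A v ∈ vanishingOn ℝ Q := by
  intro x hx
  refine Finset.sum_eq_zero fun js _ => ?_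
  by_cases hA0 : A (consIdx x js) = 0
  · rw [hA0, zero_mul]
  let i₀ : Fin (k - 1) := ⟨0, by omega⟩
  rw [Finset.prod_eq_zero (Finset.mem_univ i₀) (hv i₀ _ ((hA.consIdx_iff hA0 i₀).mpr hx)),
    mul_zero]

theorem tcontract_eq_zero (hA : IsBlockDiagonal Q A) {v : Fin (k - 1) → Fin n → ℝ}
    {i j : Fin (k - 1)} (hi : v i ∈ vanishingOn ℝ (fun x => ¬Q x)) (hj : v j ∈ vanishingOn ℝ Q) :
    tcontract A v = 0 := by
  funext x
  refine Finset.sum_eq_zero fun js _ => ?_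
  by_cases hA0 : A (consIdx x js) = 0
  · rw [hA0, zero_mul]
  by_cases hx : Q x
  · rw [Finset.prod_eq_zero (Finset.mem_univ j) (hj _ ((hA.consIdx_iff hA0 j).mpr hx)), mul_zero]
  · rw [Finset.prod_eq_zero (Finset.mem_univ i) (hi _ (mt (hA.consIdx_iff hA0 i).mp hx)),
      mul_zero]

theorem ctrlSpace_le_vanishingOn (hk : 2 ≤ k) (hA : IsBlockDiagonal Q A) {B : Set (Fin n → ℝ)}
    (hB : B ⊆ vanishingOn ℝ Q) : ctrlSpace A B ≤ vanishingOn ℝ Q :=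
  ctrlSpace_le A hB fun _ => hA.tcontract_mem_vanishingOn hk

end IsBlockDiagonal

section singleCols

variable {ι : Type*} [DecidableEq ι]

def singleCols (S : Finset ι) : Set (ι → ℝ) := {x | ∃ s ∈ S, x = Pi.single s 1}

theorem singleCols_subset_vanishingOn {Q : ι → Prop} {S : Finset ι} (hS : ∀ s ∈ S, ¬Q s) :
    singleCols S ⊆ vanishingOn ℝ Q := by
  rintro _ ⟨s, hs, rfl⟩
  exact single_mem_vanishingOn.mpr (hS s hs)

theorem singleCols_filter_union (P : ι → Prop) [DecidablePred P] (S : Finset ι) :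
    singleCols (S.filter fun i => P i) ∪ singleCols (S.filter fun i => ¬P i) = singleCols S := by
  ext x
  simp only [singleCols, Set.mem_union, Set.mem_ofPred_eq, Finset.mem_filter]
  constructor
  · rintro (⟨s, ⟨hs, -⟩, rfl⟩ | ⟨s, ⟨hs, -⟩, rfl⟩) <;> exact ⟨s, hs, rfl⟩
  · rintro ⟨s, hs, rfl⟩
    by_cases hP : P s
    · exact Or.inl ⟨s, ⟨hs, hP⟩, rfl⟩
    · exact Or.inr ⟨s, ⟨hs, hP⟩, rfl⟩

end singleCols

theorem IsBlockDiagonal.exists_mem_of_ctrlSpace_eq_top {n k : ℕ} {Q : Fin n → Prop}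
    {A : (Fin k → Fin n) → ℝ} (hk : 2 ≤ k) (hA : IsBlockDiagonal Q A) {S : Finset (Fin n)}
    (htop : ctrlSpace A (singleCols S) = ⊤) (hQ : ∃ i, Q i) : ∃ s ∈ S, Q s := by
  obtain ⟨i, hi⟩ := hQ
  by_contra hS
  have hle := hA.ctrlSpace_le_vanishingOn hk
    (singleCols_subset_vanishingOn fun s hs hQs => hS ⟨s, hs, hQs⟩)
  rw [htop] at hle
  exact single_mem_vanishingOn.mp (hle (Submodule.mem_top : Pi.single i 1 ∈ ⊤)) hi

theorem stmt19_general {n k : ℕ} (hk : 2 ≤ k) (E : Finset (Finset (Fin n)))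
    (P : Fin n → Prop) [DecidablePred P]
    (h1 : ∃ i, P i) (h2 : ∃ i, ¬P i)
    (hsplit : ∀ e ∈ E, (∀ i ∈ e, P i) ∨ (∀ i ∈ e, ¬P i)) :
    (∀ v : Fin (k - 1) → (Fin n → ℝ), (∀ i, ∀ x, ¬P x → v i x = 0) →
        ∀ x, ¬P x → tcontract (adjT n k E) v x = 0)
    ∧ (∀ v : Fin (k - 1) → (Fin n → ℝ), (∀ i, ∀ x, P x → v i x = 0) →
        ∀ x, P x → tcontract (adjT n k E) v x = 0)
    ∧ (∀ S : Finset (Fin n),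
        ctrlSpace (adjT n k E) {x | ∃ s ∈ S, x = (Pi.single s 1 : Fin n → ℝ)} = ⊤ →
          (∃ s ∈ S, P s) ∧ (∃ s ∈ S, ¬P s))
    ∧ (∀ S : Finset (Fin n),
        ctrlSpace (adjT n k E) {x | ∃ s ∈ S, x = (Pi.single s 1 : Fin n → ℝ)}
          = ctrlSpace (adjT n k E)
              {x | ∃ s ∈ S.filter (fun i => P i), x = (Pi.single s 1 : Fin n → ℝ)}
            ⊔ ctrlSpace (adjT n k E)
              {x | ∃ s ∈ S.filter (fun i => ¬P i), x = (Pi.single s 1 : Fin n → ℝ)}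
        ∧ Disjoint
            (ctrlSpace (adjT n k E)
              {x | ∃ s ∈ S.filter (fun i => P i), x = (Pi.single s 1 : Fin n → ℝ)})
            (ctrlSpace (adjT n k E)
              {x | ∃ s ∈ S.filter (fun i => ¬P i), x = (Pi.single s 1 : Fin n → ℝ)})) := by
  have hA : IsBlockDiagonal P (adjT n k E) := adjT_isBlockDiagonal hsplit
  have hC₁ : ∀ S : Finset (Fin n), ctrlSpace (adjT n k E) (singleCols (S.filter fun i => P i))
      ≤ vanishingOn ℝ (fun x => ¬P x) := fun S =>
    hA.not.ctrlSpace_le_vanishingOn hk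
      (singleCols_subset_vanishingOn fun s hs => not_not_intro (Finset.mem_filter.mp hs).2)
  have hC₂ : ∀ S : Finset (Fin n), ctrlSpace (adjT n k E) (singleCols (S.filter fun i => ¬P i))
      ≤ vanishingOn ℝ P := fun S =>
    hA.ctrlSpace_le_vanishingOn hk
      (singleCols_subset_vanishingOn fun s hs => (Finset.mem_filter.mp hs).2)
  refine ⟨fun v hv => hA.not.tcontract_mem_vanishingOn hk hv,
    fun v hv => hA.tcontract_mem_vanishingOn hk hv,
    fun S htop => ⟨hA.exists_mem_of_ctrlSpace_eq_top hk htop h1,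
      hA.not.exists_mem_of_ctrlSpace_eq_top hk htop h2⟩, fun S => ⟨?_, ?_⟩⟩
  · exact (congrArg (ctrlSpace _) (singleCols_filter_union P S)).symm.trans <|
      ctrlSpace_union _ fun _ _ _ hi hj => hA.tcontract_eq_zero (hC₁ S hi) (hC₂ S hj)
  · exact disjoint_vanishingOn_not.symm.mono (hC₁ S) (hC₂ S)

/-- Suppose the node set of a `k`-uniform hypergraph (`k ≥ 2`) splits into two nonempty
parts (given by a predicate `P`) with no hyperedge meeting both parts. Then the two
coordinate subspaces supported on each part are invariant under the contraction map;
consequently any controlling node set meets both parts, and the controllability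
subspace of a set `S` of control nodes is the (disjoint) direct sum of those of
`S ∩ V₁` and `S ∩ V₂`. -/
theorem stmt19 {n k : ℕ} (hk : 2 ≤ k) (E : Finset (Finset (Fin n)))
    (hunif : ∀ e ∈ E, e.card = k)
    (P : Fin n → Prop) [DecidablePred P]
    (h1 : ∃ i, P i) (h2 : ∃ i, ¬P i)
    (hsplit : ∀ e ∈ E, (∀ i ∈ e, P i) ∨ (∀ i ∈ e, ¬P i)) :
    (∀ v : Fin (k - 1) → (Fin n → ℝ), (∀ i, ∀ x, ¬P x → v i x = 0) →
        ∀ x, ¬P x → tcontract (adjT n k E) v x = 0)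
    ∧ (∀ v : Fin (k - 1) → (Fin n → ℝ), (∀ i, ∀ x, P x → v i x = 0) →
        ∀ x, P x → tcontract (adjT n k E) v x = 0)
    ∧ (∀ S : Finset (Fin n),
        ctrlSpace (adjT n k E) {x | ∃ s ∈ S, x = (Pi.single s 1 : Fin n → ℝ)} = ⊤ →
          (∃ s ∈ S, P s) ∧ (∃ s ∈ S, ¬P s))
    ∧ (∀ S : Finset (Fin n),
        ctrlSpace (adjT n k E) {x | ∃ s ∈ S, x = (Pi.single s 1 : Fin n → ℝ)}
          = ctrlSpace (adjT n k E)
              {x | ∃ s ∈ S.filter (fun i => P i), x = (Pi.single s 1 : Fin n → ℝ)}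
            ⊔ ctrlSpace (adjT n k E)
              {x | ∃ s ∈ S.filter (fun i => ¬P i), x = (Pi.single s 1 : Fin n → ℝ)}
        ∧ Disjoint
            (ctrlSpace (adjT n k E)
              {x | ∃ s ∈ S.filter (fun i => P i), x = (Pi.single s 1 : Fin n → ℝ)})
            (ctrlSpace (adjT n k E)
              {x | ∃ s ∈ S.filter (fun i => ¬P i), x = (Pi.single s 1 : Fin n → ℝ)})) :=
  stmt19_general hk E P h1 h2 hsplit
end
end
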